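/- arXiv:1409.2015 — 7 statements merged into one kernel-verified Lean document; each statement's English description precedes it below -/
import Mathlib

section
/- Let φ be a flow on a set X, let B ⊆ X, let τ > 0, and let ρ₀, ρ_τ : X → ℝ. For x ∈ X define ρ(x) = ∫_0^τ χ_B(φ_{-t}(x)) dt, and assume for the given x that t ↦ χ_B(φ_{-t}(x)) is integrable on [0,τ] and ρ(x) ≠ 0. Define the control u : ℝ → X → ℝ by u(s, y) = χ_B(y) · (ρ_τ(φ_{τ-s}(y)) - ρ₀(φ_{-τ}(φ_{τ-s}(y)))) / ρ(φ_{τ-s}(y)). Then ρ₀(φ_{-τ}(x)) + ∫_0^τ u(s, φ_{-(τ-s)}(x)) ds = ρ_τ(x). (The minimum-energy control u_opt(x,s) = χ_B(x) U_{τ-s}((ρ_τ - P_τ ρ₀)/ρ_B^τ)(x) steers the advection equation from ρ₀ to ρ_τ in time τ.) -/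
open MeasureTheory

/-! Along the backward trajectory `s ↦ φ_{-(τ-s)} x` the control evaluates `ρ_τ - P_τ ρ₀` and
`ρ` at `φ_{τ-s}(φ_{-(τ-s)} x) = x`, so it is `χ_B` times the constant
`(ρ_τ x - ρ₀ (φ_{-τ} x)) / ρ x`. Reversing time, `∫_0^τ χ_B(φ_{-(τ-s)} x) ds` is the occupation
time `ρ x`, which cancels the denominator. -/

theorem flow_apply_neg_apply {X : Type*} {φ : ℝ → X → X} (hφ0 : ∀ x, φ 0 x = x)
    (hφadd : ∀ s t x, φ (s + t) x = φ s (φ t x)) (t : ℝ) (x : X) : φ t (φ (-t) x) = x := by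
  rw [← hφadd, add_neg_cancel, hφ0]

theorem intervalIntegral.integral_comp_sub_left_self {E : Type*} [NormedAddCommGroup E]
    [NormedSpace ℝ E] (f : ℝ → E) (τ : ℝ) :
    ∫ s in (0 : ℝ)..τ, f (τ - s) = ∫ t in (0 : ℝ)..τ, f t := by
  simp [intervalIntegral.integral_comp_sub_left f τ]

theorem minimum_energy_control_steers_general
    {X : Type*} (φ : ℝ → X → X)
    (hφ0 : ∀ x, φ 0 x = x)
    (hφadd : ∀ s t x, φ (s + t) x = φ s (φ t x))
    (B : Set X) (τ : ℝ) (ρ₀ ρτ : X → ℝ)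
    (ρ : X → ℝ) (hρ : ∀ x, ρ x = ∫ t in (0 : ℝ)..τ, B.indicator (fun _ => (1 : ℝ)) (φ (-t) x))
    (x : X)
    (hρx : ρ x ≠ 0)
    (u : ℝ → X → ℝ)
    (hu : ∀ s y, u s y = B.indicator (fun _ => (1 : ℝ)) y *
      ((ρτ (φ (τ - s) y) - ρ₀ (φ (-τ) (φ (τ - s) y))) / ρ (φ (τ - s) y))) :
    ρ₀ (φ (-τ) x) + ∫ s in (0 : ℝ)..τ, u s (φ (-(τ - s)) x) = ρτ x := by
  have hcontrol : ∀ s, u s (φ (-(τ - s)) x) = B.indicator (fun _ => (1 : ℝ)) (φ (-(τ - s)) x) *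
      ((ρτ x - ρ₀ (φ (-τ) x)) / ρ x) := fun s => by
    rw [hu, flow_apply_neg_apply hφ0 hφadd]
  have hoccupation : ∫ s in (0 : ℝ)..τ, B.indicator (fun _ => (1 : ℝ)) (φ (-(τ - s)) x) = ρ x :=
    (intervalIntegral.integral_comp_sub_left_self
      (fun t => B.indicator (fun _ => (1 : ℝ)) (φ (-t) x)) τ).trans (hρ x).symm
  simp_rw [hcontrol]
  rw [intervalIntegral.integral_mul_const, hoccupation, mul_div_cancel₀ _ hρx]
  ring

/-- The minimum-energy control
`u_opt(x,s) = χ_B(x) U_{τ-s}((ρ_τ - P_τ ρ₀)/ρ_B^τ)(x)` steers the advection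
equation from the initial state `ρ₀` to the final state `ρ_τ` in time `τ`. -/
theorem minimum_energy_control_steers
    {X : Type*} (φ : ℝ → X → X)
    (hφ0 : ∀ x, φ 0 x = x)
    (hφadd : ∀ s t x, φ (s + t) x = φ s (φ t x))
    (B : Set X) (τ : ℝ) (hτ : 0 < τ) (ρ₀ ρτ : X → ℝ)
    (ρ : X → ℝ) (hρ : ∀ x, ρ x = ∫ t in (0 : ℝ)..τ, B.indicator (fun _ => (1 : ℝ)) (φ (-t) x))
    (x : X)
    (hint : IntervalIntegrable (fun t => B.indicator (fun _ => (1 : ℝ)) (φ (-t) x))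
      volume 0 τ)
    (hρx : ρ x ≠ 0)
    (u : ℝ → X → ℝ)
    (hu : ∀ s y, u s y = B.indicator (fun _ => (1 : ℝ)) y *
      ((ρτ (φ (τ - s) y) - ρ₀ (φ (-τ) (φ (τ - s) y))) / ρ (φ (τ - s) y))) :
    ρ₀ (φ (-τ) x) + ∫ s in (0 : ℝ)..τ, u s (φ (-(τ - s)) x) = ρτ x :=
  minimum_energy_control_steers_general φ hφ0 hφadd B τ ρ₀ ρτ ρ hρ x hρx u hu
end

section
/- Let φ be a flow on a set X, let B ⊆ X, let τ > 0, and for x ∈ X define ρ(x) = ∫_0^τ χ_B(φ_{-t}(x)) dt, assuming for every x that t ↦ χ_B(φ_{-t}(x)) is integrable on [0,τ]. Then for every g : X → ℝ there exists u : ℝ → X → ℝ such that u(s,y) = 0 whenever y ∉ B, and for every x with ρ(x) ≠ 0 one has ∫_0^τ u(s, φ_{-(τ-s)}(x)) ds = g(x). (Exact controllability of the advection equation with volume-preserving velocity field on the reachable set R^τ, where the controllability gramian density ρ is strictly positive.) -/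
/-!
Take the control that is switched on inside `B` and, along each trajectory, carries the constant
value `g / ρ` of its endpoint. Since `φ_{τ-s} ∘ φ_{-(τ-s)} = id`, the state reached at `x` is
`(g x / ρ x) · ∫_0^τ χ_B(φ_{-(τ-s)} x) ds = (g x / ρ x) · ρ x`, after the substitution `t = τ - s`.
-/

open MeasureTheory

section

variable {X : Type*} {φ : ℝ → X → X}

lemma flow_apply_flow_neg (hφ0 : ∀ x, φ 0 x = x)
    (hφadd : ∀ s t x, φ (s + t) x = φ s (φ t x)) (a : ℝ) (x : X) : φ a (φ (-a) x) = x := by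
  rw [← hφadd, add_neg_cancel, hφ0]

noncomputable def transportControl (φ : ℝ → X → X) (B : Set X) (τ : ℝ) (h : X → ℝ) : ℝ → X → ℝ :=
  fun s y => B.indicator (fun _ => (1 : ℝ)) y * h (φ (τ - s) y)

lemma transportControl_of_notMem (B : Set X) (τ : ℝ) (h : X → ℝ) (s : ℝ) {y : X}
    (hy : y ∉ B) : transportControl φ B τ h s y = 0 := by
  simp [transportControl, Set.indicator_of_notMem hy]

lemma integral_transportControl_comp_flow (hφ0 : ∀ x, φ 0 x = x)
    (hφadd : ∀ s t x, φ (s + t) x = φ s (φ t x)) (B : Set X) (τ : ℝ) (h : X → ℝ) (x : X) :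
    ∫ s in (0 : ℝ)..τ, transportControl φ B τ h s (φ (-(τ - s)) x) =
      (∫ t in (0 : ℝ)..τ, B.indicator (fun _ => (1 : ℝ)) (φ (-t) x)) * h x := by
  simp only [transportControl, flow_apply_flow_neg hφ0 hφadd]
  rw [intervalIntegral.integral_mul_const,
    intervalIntegral.integral_comp_sub_left (fun t => B.indicator (fun _ => (1 : ℝ)) (φ (-t) x)),
    sub_self, sub_zero]

end

theorem exact_controllability_on_reachable_set_general
    {X : Type*} (φ : ℝ → X → X)
    (hφ0 : ∀ x, φ 0 x = x)
    (hφadd : ∀ s t x, φ (s + t) x = φ s (φ t x))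
    (B : Set X) (τ : ℝ)
    (ρ : X → ℝ) (hρ : ∀ x, ρ x = ∫ t in (0 : ℝ)..τ, B.indicator (fun _ => (1 : ℝ)) (φ (-t) x)) :
    ∀ g : X → ℝ, ∃ u : ℝ → X → ℝ,
      (∀ s y, y ∉ B → u s y = 0) ∧
      ∀ x, ρ x ≠ 0 → ∫ s in (0 : ℝ)..τ, u s (φ (-(τ - s)) x) = g x := by
  intro g
  refine ⟨transportControl φ B τ (fun y => g y / ρ y),
    fun s y hy => transportControl_of_notMem B τ _ s hy, fun x hx => ?_⟩
  rw [integral_transportControl_comp_flow hφ0 hφadd, ← hρ x]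
  exact mul_div_cancel₀ (g x) hx

/-- Exact controllability of the advection equation with volume-preserving
velocity field on the reachable set `R^τ`, on which the controllability
gramian density `ρ(x) = ∫_0^τ χ_B(φ_{-t}(x)) dt` is strictly positive. -/
theorem exact_controllability_on_reachable_set
    {X : Type*} (φ : ℝ → X → X)
    (hφ0 : ∀ x, φ 0 x = x)
    (hφadd : ∀ s t x, φ (s + t) x = φ s (φ t x))
    (B : Set X) (τ : ℝ) (hτ : 0 < τ)
    (ρ : X → ℝ) (hρ : ∀ x, ρ x = ∫ t in (0 : ℝ)..τ, B.indicator (fun _ => (1 : ℝ)) (φ (-t) x))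
    (hint : ∀ x, IntervalIntegrable (fun t => B.indicator (fun _ => (1 : ℝ)) (φ (-t) x))
      volume 0 τ) :
    ∀ g : X → ℝ, ∃ u : ℝ → X → ℝ,
      (∀ s y, y ∉ B → u s y = 0) ∧
      ∀ x, ρ x ≠ 0 → ∫ s in (0 : ℝ)..τ, u s (φ (-(τ - s)) x) = g x :=
  exact_controllability_on_reachable_set_general φ hφ0 hφadd B τ ρ hρ
end

section
/- Let U and H be real Hilbert spaces, let T : U → H be a continuous linear map, and suppose there is a continuous linear equivalence e : H ≃ H whose underlying map equals T ∘ T*, where T* denotes the Hilbert-space adjoint of T. For y ∈ H set u₀ := T*(e⁻¹(y)). Then: (i) T u₀ = y; (ii) for every u ∈ U with T u = y one has ‖u₀‖ ≤ ‖u‖; and (iii) ‖u₀‖² = ⟨y, e⁻¹(y)⟩. (Minimum-energy control: u_opt = B^{τ*}(C_B^τ)^{-1}(ρ_τ - P_τ ρ₀) has minimal norm among all controls achieving the target, with energy ⟨ρ_τ - P_τ ρ₀, (C_B^τ)^{-1}(ρ_τ - P_τ ρ₀)⟩.) -/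
/-!
The control `u₀ = T* (e⁻¹ y)` lies in the range of `T*`, which is orthogonal to `ker T`. Any other
control `u` reaching `y` differs from `u₀` by an element of `ker T`, so by Pythagoras
`‖u‖² = ‖u₀‖² + ‖u - u₀‖² ≥ ‖u₀‖²`. The energy is `⟪T* z, T* z⟫ = ⟪z, T T* z⟫` with `z = e⁻¹ y`.
-/

open ContinuousLinearMap

open scoped InnerProduct InnerProductSpace

namespace ContinuousLinearMap

variable {𝕜 E F : Type*} [RCLike 𝕜]
  [NormedAddCommGroup E] [InnerProductSpace 𝕜 E] [CompleteSpace E]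
  [NormedAddCommGroup F] [InnerProductSpace 𝕜 F] [CompleteSpace F]

theorem inner_adjoint_apply_sub_eq_zero (T : E →L[𝕜] F) (z : F) {u v : E} (h : T u = T v) :
    ⟪(T†) z, u - v⟫_𝕜 = 0 := by
  rw [adjoint_inner_left, map_sub, h, sub_self, inner_zero_right]

theorem norm_adjoint_apply_le_of_apply_eq (T : E →L[𝕜] F) (z : F) {u : E}
    (hu : T u = T ((T†) z)) : ‖(T†) z‖ ≤ ‖u‖ := by
  have pythagoras : ‖u‖ * ‖u‖ = ‖(T†) z‖ * ‖(T†) z‖ + ‖u - (T†) z‖ * ‖u - (T†) z‖ := by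
    simpa using norm_add_sq_eq_norm_sq_add_norm_sq_of_inner_eq_zero _ _
      (inner_adjoint_apply_sub_eq_zero T z hu)
  exact (mul_self_le_mul_self_iff (norm_nonneg _) (norm_nonneg _)).mpr
    (pythagoras ▸ le_add_of_nonneg_right (mul_self_nonneg _))

theorem norm_adjoint_apply_sq (T : E →L[𝕜] F) (z : F) :
    ‖(T†) z‖ ^ 2 = RCLike.re ⟪z, T ((T†) z)⟫_𝕜 := by
  rw [← adjoint_inner_left, inner_self_eq_norm_sq]

end ContinuousLinearMap

/-- Minimum-energy control: when the gramian `C = T T*` is invertible (as the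
continuous linear equivalence `e`), the control `u₀ = T* (e⁻¹ y)` reaches the
target `y`, has minimal norm among all controls reaching `y`, and its energy
is `‖u₀‖² = ⟨y, e⁻¹ y⟩`. -/
theorem minimum_norm_control
    {U H : Type*}
    [NormedAddCommGroup U] [InnerProductSpace ℝ U] [CompleteSpace U]
    [NormedAddCommGroup H] [InnerProductSpace ℝ H] [CompleteSpace H]
    (T : U →L[ℝ] H) (e : H ≃L[ℝ] H)
    (he : (e : H →L[ℝ] H) = T ∘L (ContinuousLinearMap.adjoint T))
    (y : H) (u₀ : U) (hu₀ : u₀ = (ContinuousLinearMap.adjoint T) (e.symm y)) :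
    T u₀ = y ∧
    (∀ u : U, T u = y → ‖u₀‖ ≤ ‖u‖) ∧
    ‖u₀‖ ^ 2 = inner ℝ y (e.symm y) := by
  subst hu₀
  have hT : T ((T†) (e.symm y)) = y := by
    rw [← comp_apply, ← he, ContinuousLinearEquiv.coe_coe, e.apply_symm_apply]
  refine ⟨hT, fun u hu => norm_adjoint_apply_le_of_apply_eq T _ (hu.trans hT.symm), ?_⟩
  rw [norm_adjoint_apply_sq, hT, real_inner_comm, RCLike.re_to_real]
end

section
/- Let φ be a flow on a set X, let v₀ : X → [0,∞] be such that for the given x ∈ X the map s ↦ v₀(φ_s(x)) is measurable on ℝ. Then for every t ≥ 0: ∫⁻_{s ∈ [0,∞)} v₀(φ_{-s}(φ_t(x))) ds = ∫⁻_{s ∈ [0,t]} v₀(φ_s(x)) ds + ∫⁻_{s ∈ [0,∞)} v₀(φ_{-s}(x)) ds. (With v₀ = χ_B this says the infinite-time controllability gramian density ρ_B(x) = ∫_0^∞ P_t χ_B(x) dt satisfies ρ_B(φ_t(x)) - ρ_B(x) = ∫_0^t χ_B(φ_s(x)) ds, the characteristic (weak) form of the steady-state equation ∇·(f ρ_B)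 = χ_B.) -/
/-!
Along the orbit of `x` put `f s = v₀ (φ s x)`. The flow law turns `v₀ (φ (-s) (φ t x))` into
`f (t - s)`, so reflecting `s ↦ t - s` identifies the left side with the integral of `f` over
`(-∞, t]` and the last term with its integral over `(-∞, 0]`; up to the null set `{0}`, `(-∞, t]`
is the disjoint union of `[0, t]` and `(-∞, 0]`.
-/

open MeasureTheory Set
open scoped ENNReal

theorem lintegral_Iic_eq_lintegral_Icc_add_lintegral_Iic {α : Type*} [LinearOrder α]
    [MeasurableSpace α] [TopologicalSpace α] [ClosedIicTopology α] [OpensMeasurableSpace α]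
    {μ : Measure α} [NullSingletonClass μ] (f : α → ℝ≥0∞) {a b : α} (hab : a ≤ b) :
    ∫⁻ s in Iic b, f s ∂μ = (∫⁻ s in Icc a b, f s ∂μ) + ∫⁻ s in Iic a, f s ∂μ := by
  rw [← Iic_union_Ioc_eq_Iic hab, union_comm,
    lintegral_union measurableSet_Iic (Iic_disjoint_Ioc le_rfl).symm,
    setLIntegral_congr Ioc_ae_eq_Icc]

theorem lintegral_Ici_comp_const_sub (f : ℝ → ℝ≥0∞) (t : ℝ) :
    ∫⁻ s in Ici 0, f (t - s) = ∫⁻ u in Iic t, f u := by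
  have hpre : (fun s => t - s) ⁻¹' Iic t = Ici 0 := by
    ext s
    simp
  rw [← hpre]
  exact (Measure.measurePreserving_sub_left volume t).setLIntegral_comp_preimage_emb
    (MeasurableEquiv.subLeft t).measurableEmbedding f _

theorem lintegral_Ici_comp_const_sub_eq_lintegral_Icc_add (f : ℝ → ℝ≥0∞) {t : ℝ} (ht : 0 ≤ t) :
    ∫⁻ s in Ici 0, f (t - s) = (∫⁻ s in Icc 0 t, f s) + ∫⁻ s in Ici 0, f (-s) := by
  have hneg : ∫⁻ s in Ici 0, f (-s) = ∫⁻ u in Iic 0, f u := by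
    simpa using lintegral_Ici_comp_const_sub f 0
  rw [hneg, lintegral_Ici_comp_const_sub, lintegral_Iic_eq_lintegral_Icc_add_lintegral_Iic f ht]

theorem gramian_density_characteristic_identity_general
    {X : Type*} (φ : ℝ → X → X)
    (hφadd : ∀ s t x, φ (s + t) x = φ s (φ t x))
    (v₀ : X → ℝ≥0∞) (x : X) :
    ∀ t : ℝ, 0 ≤ t →
      ∫⁻ s in Set.Ici (0 : ℝ), v₀ (φ (-s) (φ t x))
        = (∫⁻ s in Set.Icc (0 : ℝ) t, v₀ (φ s x))
          + ∫⁻ s in Set.Ici (0 : ℝ), v₀ (φ (-s) x) := by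
  intro t ht
  have horbit : ∀ s : ℝ, φ (-s) (φ t x) = φ (t - s) x := fun s => by
    rw [← hφadd, neg_add_eq_sub]
  simp only [horbit]
  exact lintegral_Ici_comp_const_sub_eq_lintegral_Icc_add (fun s => v₀ (φ s x)) ht

/-- The infinite-time controllability gramian density
`ρ_B(x) = ∫_0^∞ P_t χ_B(x) dt` satisfies (with `v₀ = χ_B`) the characteristic
(weak) form `ρ_B(φ_t(x)) = ∫_0^t χ_B(φ_s(x)) ds + ρ_B(x)` of the steady-state
equation `∇·(f ρ_B) = χ_B`. -/
theorem gramian_density_characteristic_identity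
    {X : Type*} (φ : ℝ → X → X)
    (hφ0 : ∀ x, φ 0 x = x)
    (hφadd : ∀ s t x, φ (s + t) x = φ s (φ t x))
    (v₀ : X → ℝ≥0∞) (x : X)
    (hmeas : Measurable (fun s : ℝ => v₀ (φ s x))) :
    ∀ t : ℝ, 0 ≤ t →
      ∫⁻ s in Set.Ici (0 : ℝ), v₀ (φ (-s) (φ t x))
        = (∫⁻ s in Set.Icc (0 : ℝ) t, v₀ (φ s x))
          + ∫⁻ s in Set.Ici (0 : ℝ), v₀ (φ (-s) x) :=
  gramian_density_characteristic_identity_general φ hφadd v₀ x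
end

section
/- Let E be a real normed vector space, f : E → E, and let φ : ℝ → E → E satisfy: for every x ∈ E and t ∈ ℝ, the curve s ↦ φ_s(x) has derivative f(φ_t(x)) at time t. Let v : E → ℝ be differentiable with v(y) ≥ 0 for all y, let v₀ : E → ℝ be continuous with v₀(y) ≥ 0 for all y, and suppose Dv(y)[f(y)] = -v₀(y) for all y ∈ E. Let D ⊆ E be compact with v₀(y) > 0 for all y ∈ D. Then for every x₀ ∈ E it is not the case that φ_t(x₀) ∈ D for all t ≥ 0. (Sufficiency direction of the transport-equation stability criterion: existence of a positive solution v of f · ∇v = -v₀ forbids any forward trajectory from remaining in a region where v₀ is strictly positive.) -/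
/-!
Along a trajectory that stays in `D`, the function `t ↦ v (φ t x₀)` has derivative
`-v₀ (φ t x₀) ≤ -ε`, where `ε > 0` is a lower bound of `v₀` on the compact set `D`.
It therefore decreases at least linearly and becomes negative, contradicting `v ≥ 0`.
-/

theorem exists_neg_of_hasDerivAt_le_neg {g g' : ℝ → ℝ} {ε : ℝ}
    (hg : ∀ t, HasDerivAt g (g' t) t) (hε : 0 < ε) (hg' : ∀ t, 0 < t → g' t ≤ -ε) :
    ∃ t, 0 ≤ t ∧ g t < 0 := by
  set T := |g 0| / ε + 1
  have hT : 0 ≤ T := by positivity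
  have hεT : ε * T = |g 0| + ε := by simp only [T]; field_simp
  have hdecay : g T - g 0 ≤ -ε * (T - 0) := by
    refine (convex_Ici 0).image_sub_le_mul_sub_of_deriv_le
      (fun t _ => (hg t).continuousAt.continuousWithinAt)
      (fun t _ => (hg t).differentiableAt.differentiableWithinAt) (fun t ht => ?_)
      0 Set.self_mem_Ici T hT hT
    rw [interior_Ici] at ht
    exact (hg t).deriv ▸ hg' t ht
  exact ⟨T, hT, by linarith [le_abs_self (g 0)]⟩

theorem hasDerivAt_comp_trajectory {E : Type*} [NormedAddCommGroup E] [NormedSpace ℝ E]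
    {f : E → E} {φ : ℝ → E → E}
    (hφ : ∀ (x : E) (t : ℝ), HasDerivAt (fun s : ℝ => φ s x) (f (φ t x)) t)
    {v : E → ℝ} (hv : Differentiable ℝ v) (x : E) (t : ℝ) :
    HasDerivAt (fun s => v (φ s x)) (fderiv ℝ v (φ t x) (f (φ t x))) t :=
  (hv (φ t x)).hasFDerivAt.comp_hasDerivAt t (hφ x t)

theorem transport_solution_forbids_trapped_trajectories_general
    {E : Type*} [NormedAddCommGroup E] [NormedSpace ℝ E]
    (f : E → E) (φ : ℝ → E → E)
    (hφ : ∀ (x : E) (t : ℝ), HasDerivAt (fun s : ℝ => φ s x) (f (φ t x)) t)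
    (v : E → ℝ) (hv : Differentiable ℝ v) (hvpos : ∀ y, 0 ≤ v y)
    (v₀ : E → ℝ) (hv₀ : Continuous v₀)
    (hpde : ∀ y : E, fderiv ℝ v y (f y) = -v₀ y)
    (D : Set E) (hD : IsCompact D) (hpos : ∀ y ∈ D, 0 < v₀ y) :
    ∀ x₀ : E, ¬ (∀ t : ℝ, 0 ≤ t → φ t x₀ ∈ D) := by
  intro x₀ htrap
  obtain ⟨ε, hε, hεD⟩ := hD.exists_forall_le' hv₀.continuousOn hpos
  obtain ⟨t, -, ht⟩ := exists_neg_of_hasDerivAt_le_neg (hasDerivAt_comp_trajectory hφ hv x₀) hε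
    fun t ht => by
      rw [hpde, neg_le_neg_iff]
      exact hεD _ (htrap t ht.le)
  exact (hvpos _).not_gt ht

/-- Sufficiency direction of the transport-equation stability criterion:
the existence of a positive solution `v` of `f · ∇v = -v₀` forbids any forward
trajectory from remaining in a compact region where `v₀` is strictly positive. -/
theorem transport_solution_forbids_trapped_trajectories
    {E : Type*} [NormedAddCommGroup E] [NormedSpace ℝ E]
    (f : E → E) (φ : ℝ → E → E)
    (hφ0 : ∀ x, φ 0 x = x)
    (hφ : ∀ (x : E) (t : ℝ), HasDerivAt (fun s : ℝ => φ s x) (f (φ t x)) t)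
    (v : E → ℝ) (hv : Differentiable ℝ v) (hvpos : ∀ y, 0 ≤ v y)
    (v₀ : E → ℝ) (hv₀ : Continuous v₀) (hv₀pos : ∀ y, 0 ≤ v₀ y)
    (hpde : ∀ y : E, fderiv ℝ v y (f y) = -v₀ y)
    (D : Set E) (hD : IsCompact D) (hpos : ∀ y ∈ D, 0 < v₀ y) :
    ∀ x₀ : E, ¬ (∀ t : ℝ, 0 ≤ t → φ t x₀ ∈ D) :=
  transport_solution_forbids_trapped_trajectories_general f φ hφ v hv hvpos v₀ hv₀ hpde D hD hpos
end

section
/- Let E be a metric space, x* ∈ E, x ∈ E, and let φ : ℝ → E → E satisfy φ_0(x) = x, with t ↦ φ_t(x) continuous and φ_t(x) → x* as t → ∞. Let v₀ : E → ℝ be continuous with v₀(y) ≥ 0 for all y, and suppose there is δ > 0 such that v₀(y) = 0 whenever dist(y, x*) < δ. Then the function t ↦ v₀(φ_t(x)) is Lebesgue integrable on [0,∞); moreover, if v₀(x) > 0 then ∫_{[0,∞)} v₀(φ_t(x)) dt > 0. (Necessity direction of the transport-equation stability criterion: if the equilibrium x* is globally asymptotically stable, then v(x) = ∫_0^∞ v₀(φ_t(x))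 dt is a well-defined, positive solution of f · ∇v = -v₀ away from the equilibrium.) -/
/-! `v₀` vanishes near `x*` and the trajectory eventually stays in that neighbourhood, so
`t ↦ v₀ (φ t x)` is a continuous function vanishing for large `t`, hence integrable on `[0, ∞)`.
If `v₀ x > 0`, continuity keeps the integrand positive on some `[0, ε)`, a set of positive
measure, and nonnegativity does the rest. -/

open MeasureTheory Filter Set

section OrderedDomain

variable {X : Type*} [TopologicalSpace X] [LinearOrder X] [OrderTopology X] [MeasurableSpace X]
  [OpensMeasurableSpace X] {μ : Measure X} {a : X}

theorem ContinuousOn.integrableOn_Ici_of_eventuallyEq_zero {E : Type*} [NormedAddCommGroup E]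
    [CompactIccSpace X] [IsLocallyFiniteMeasure μ] [SecondCountableTopologyEither X E]
    {f : X → E} (hf : ContinuousOn f (Ici a)) (h0 : f =ᶠ[atTop] 0) :
    IntegrableOn f (Ici a) μ := by
  have : Nonempty X := ⟨a⟩
  obtain ⟨b, hb⟩ := eventually_atTop.1 h0
  have hb_int : IntegrableOn f (Ici b) μ :=
    integrableOn_zero.congr_fun (fun t ht => (hb t ht).symm) measurableSet_Ici
  exact integrableOn_Ici_iff_integrableAtFilter_atTop.2
    ⟨integrableAtFilter_atTop_iff.2 ⟨b, hb_int⟩, hf.locallyIntegrableOn measurableSet_Ici⟩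

theorem ContinuousWithinAt.setIntegral_Ici_pos [DenselyOrdered X] [NoMaxOrder X]
    [μ.IsOpenPosMeasure] {f : X → ℝ} (hf : ContinuousWithinAt f (Ici a) a)
    (hnonneg : ∀ t ∈ Ici a, 0 ≤ f t) (hint : IntegrableOn f (Ici a) μ) (ha : 0 < f a) :
    0 < ∫ t in Ici a, f t ∂μ := by
  rw [setIntegral_pos_iff_support_of_nonneg_ae
    ((ae_restrict_iff' measurableSet_Ici).2 (ae_of_all _ hnonneg)) hint]
  obtain ⟨b, hab, hb⟩ := mem_nhdsGE_iff_exists_Ico_subset.1 (hf.eventually (lt_mem_nhds ha))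
  calc 0 < μ (Ioo a b) := isOpen_Ioo.measure_pos μ (nonempty_Ioo.2 hab)
    _ ≤ μ (Function.support f ∩ Ici a) :=
      measure_mono fun t ht => ⟨(hb (Ioo_subset_Ico_self ht)).ne', ht.1.le⟩

end OrderedDomain

/-- Necessity direction of the transport-equation stability criterion: if the
trajectory of `x` converges to the equilibrium `x*` and `v₀` vanishes on a
`δ`-ball around `x*`, then `v(x) = ∫_0^∞ v₀(φ_t(x)) dt` is well defined, and
positive when `v₀(x) > 0`. -/
theorem transport_solution_well_defined_and_positive
    {E : Type*} [MetricSpace E]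
    (xstar : E) (x : E) (φ : ℝ → E → E)
    (hφ0 : φ 0 x = x)
    (hcont : Continuous (fun t : ℝ => φ t x))
    (hconv : Tendsto (fun t : ℝ => φ t x) atTop (nhds xstar))
    (v₀ : E → ℝ) (hv₀ : Continuous v₀) (hv₀nonneg : ∀ y, 0 ≤ v₀ y)
    (δ : ℝ) (hδ : 0 < δ) (hzero : ∀ y, dist y xstar < δ → v₀ y = 0) :
    IntegrableOn (fun t : ℝ => v₀ (φ t x)) (Set.Ici (0 : ℝ)) volume ∧
      (0 < v₀ x → 0 < ∫ t in Set.Ici (0 : ℝ), v₀ (φ t x)) := by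
  have hv₀φ : Continuous fun t => v₀ (φ t x) := hv₀.comp hcont
  have h_eventually_zero : (fun t => v₀ (φ t x)) =ᶠ[atTop] 0 :=
    (hconv.eventually (Metric.ball_mem_nhds xstar hδ)).mono fun t ht => hzero _ ht
  have hint : IntegrableOn (fun t => v₀ (φ t x)) (Ici 0) volume :=
    hv₀φ.continuousOn.integrableOn_Ici_of_eventuallyEq_zero h_eventually_zero
  exact ⟨hint, fun hpos => hv₀φ.continuousWithinAt.setIntegral_Ici_pos
    (fun t _ => hv₀nonneg _) hint (by rwa [hφ0])⟩
end

section
/- Let E be a metric space, x* ∈ E, let φ : ℝ → E → E, and fix x ∈ E with φ_t(x) → x* as t → ∞. Let A ⊆ E and δ > 0 be such that dist(y, x*) ≥ δ for all y ∈ A. Then ∫⁻_{t ∈ [0,∞)} χ_A(φ_t(x)) dt < ∞, where the integral is the Lebesgue lower integral. (Well-definedness of the infinite-time observability gramian: if the advective vector field is globally asymptotically stable, then V(x) = ∫_0^∞ U_t χ_A(x) dt = ∫_0^∞ χ_A(φ_t(x)) dt is finite for sensors located on a set A bounded away from the equilibrium.) -/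
open MeasureTheory Filter Topology
open scoped ENNReal

/- The trajectory eventually stays in the ball of radius `δ` about `x*`, which misses `A`; so
`χ_A(φ_t x)` vanishes for `t ≥ T`, and the integral is at most the length of `[0, T]`. -/

lemma compl_mem_nhds_of_le_dist {E : Type*} [PseudoMetricSpace E] {A : Set E} {x : E} {δ : ℝ}
    (hδ : 0 < δ) (hA : ∀ y ∈ A, δ ≤ dist y x) : Aᶜ ∈ 𝓝 x :=
  mem_of_superset (Metric.ball_mem_nhds x hδ) fun y hy hyA =>
    (hA y hyA).not_gt (Metric.mem_ball.1 hy)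

lemma exists_preimage_subset_Iio_of_tendsto {X : Type*} [TopologicalSpace X] {f : ℝ → X}
    {y : X} (hf : Tendsto f atTop (𝓝 y)) {A : Set X} (hA : Aᶜ ∈ 𝓝 y) :
    ∃ T, f ⁻¹' A ⊆ Set.Iio T := by
  obtain ⟨T, hT⟩ := eventually_atTop.1 (hf hA)
  exact ⟨T, fun t ht => lt_of_not_ge fun hTt => hT t hTt ht⟩

lemma setLIntegral_indicator_comp_Ici_lt_top_of_tendsto {X : Type*} [TopologicalSpace X]
    {μ : Measure ℝ} [IsLocallyFiniteMeasure μ] {f : ℝ → X} {y : X}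
    (hf : Tendsto f atTop (𝓝 y)) {A : Set X} (hA : Aᶜ ∈ 𝓝 y) (a : ℝ) :
    ∫⁻ t in Set.Ici a, A.indicator 1 (f t) ∂μ < ⊤ := by
  obtain ⟨T, hT⟩ := exists_preimage_subset_Iio_of_tendsto hf hA
  calc ∫⁻ t in Set.Ici a, A.indicator 1 (f t) ∂μ
      = ∫⁻ t in Set.Ici a, (f ⁻¹' A).indicator 1 t ∂μ := by
        simp_rw [← Set.indicator_comp_right]; rfl
    _ ≤ μ.restrict (Set.Ici a) (Set.Iic T) :=
        (lintegral_indicator_one_le _).trans (measure_mono (hT.trans Set.Iio_subset_Iic_self))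
    _ = μ (Set.Icc a T) := by
        rw [Measure.restrict_apply measurableSet_Iic, Set.inter_comm, Set.Ici_inter_Iic]
    _ < ⊤ := isCompact_Icc.measure_lt_top

/-- Well-definedness of the infinite-time observability gramian: if the
trajectory of `x` converges to the equilibrium `x*` (global asymptotic
stability of the advective vector field), then
`V(x) = ∫_0^∞ U_t χ_A(x) dt = ∫_0^∞ χ_A(φ_t(x)) dt` is finite for any sensor
set `A` bounded away from the equilibrium. -/
theorem observability_gramian_finite
    {E : Type*} [MetricSpace E]
    (xstar : E) (φ : ℝ → E → E) (x : E)
    (hconv : Tendsto (fun t : ℝ => φ t x) atTop (nhds xstar))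
    (A : Set E) (δ : ℝ) (hδ : 0 < δ) (hA : ∀ y ∈ A, δ ≤ dist y xstar) :
    ∫⁻ t in Set.Ici (0 : ℝ), A.indicator (fun _ => (1 : ℝ≥0∞)) (φ t x) < ⊤ :=
  setLIntegral_indicator_comp_Ici_lt_top_of_tendsto hconv (compl_mem_nhds_of_le_dist hδ hA) 0
end
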